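/- Let h : ℝ → ℝ be continuously differentiable on [−1,1], and suppose h(c) = 0 for some c ∈ [−1,1]. Then ( sup_{x ∈ [−1,1]} |h(x)| )² ≤ 2 · ( ∫_{−1}^{1} h(t)² dt )^{1/2} · ( ∫_{−1}^{1} (h'(t))² dt )^{1/2}. -/

import Mathlib

open MeasureTheory

/-- **Sobolev interpolation (Agmon) inequality** on `[−1,1]` for a continuously differentiable
function vanishing at some point:
`(sup_{[−1,1]} |h|)² ≤ 2·(∫_{−1}^1 h²)^{1/2}·(∫_{−1}^1 (h')²)^{1/2}`. -/
theorem agmon_inequality (h : ℝ → ℝ)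
    (hreg : ContDiffOn ℝ 1 h (Set.Icc (-1 : ℝ) 1))
    (c : ℝ) (hc : c ∈ Set.Icc (-1 : ℝ) 1) (hzero : h c = 0) :
    (sSup ((fun x => |h x|) '' Set.Icc (-1 : ℝ) 1)) ^ 2 ≤
      2 * Real.sqrt (∫ t in Set.Icc (-1 : ℝ) 1, h t ^ 2) *
        Real.sqrt (∫ t in Set.Icc (-1 : ℝ) 1, derivWithin h (Set.Icc (-1 : ℝ) 1) t ^ 2) := by
  set S : Set ℝ := Set.Icc (-1 : ℝ) 1 with hS
  have hUD : UniqueDiffOn ℝ S := uniqueDiffOn_Icc (by norm_num)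
  have hcont : ContinuousOn h S := hreg.continuousOn
  set f' : ℝ → ℝ := derivWithin h S with hf'
  have hf'cont : ContinuousOn f' S := hreg.continuousOn_derivWithin hUD le_rfl
  have hcompact : IsCompact S := isCompact_Icc
  -- derivative at interior points
  have hderiv : ∀ t ∈ Set.Ioo (-1 : ℝ) 1, HasDerivAt h (f' t) t := by
    intro t ht
    have h1 : HasDerivWithinAt h (f' t) S t :=
      ((hreg.differentiableOn one_ne_zero) t (Set.Ioo_subset_Icc_self ht)).hasDerivWithinAt
    exact h1.hasDerivAt (Icc_mem_nhds ht.1 ht.2)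
  -- key pointwise bound
  have key : ∀ x ∈ S, h x ^ 2 ≤ ∫ t in S, 2 * |h t| * |f' t| := by
    intro x hx
    have hgcont : ContinuousOn (fun t => 2 * |h t| * |f' t|) S :=
      (continuousOn_const.mul hcont.abs).mul hf'cont.abs
    have hgint : IntegrableOn (fun t => 2 * |h t| * |f' t|) S :=
      hgcont.integrableOn_compact hcompact
    -- FTC on [a,b] = uIcc c x
    have main : ∀ a b : ℝ, a ∈ S → b ∈ S → a ≤ b →
        |h b ^ 2 - h a ^ 2| ≤ ∫ t in S, 2 * |h t| * |f' t| := by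
      intro a b ha hb hab
      have hsub : Set.Icc a b ⊆ S := Set.Icc_subset_Icc ha.1 hb.2
      have hcd : ∀ t ∈ Set.Ioo a b, HasDerivAt (fun y => h y ^ 2) (2 * h t * f' t) t := by
        intro t ht
        have : t ∈ Set.Ioo (-1 : ℝ) 1 :=
          ⟨lt_of_le_of_lt ha.1 ht.1, lt_of_lt_of_le ht.2 hb.2⟩
        have := (hderiv t this).fun_pow 2
        simpa [mul_comm, mul_assoc, mul_left_comm] using this
      have hintcd : IntervalIntegrable (fun t => 2 * h t * f' t) volume a b := by
        apply ContinuousOn.intervalIntegrable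
        rw [Set.uIcc_of_le hab]
        exact ((continuousOn_const.mul (hcont.mono hsub)).mul (hf'cont.mono hsub))
      have hcont2 : ContinuousOn (fun y => h y ^ 2) (Set.Icc a b) :=
        (hcont.mono hsub).pow 2
      have hftc := intervalIntegral.integral_eq_sub_of_hasDerivAt_of_le hab hcont2 hcd hintcd
      rw [← hftc]
      have h1 : |∫ t in a..b, 2 * h t * f' t| ≤ ∫ t in a..b, 2 * |h t| * |f' t| := by
        have := intervalIntegral.abs_integral_le_integral_abs
          (f := fun t => 2 * h t * f' t) (μ := volume) hab
        refine this.trans (le_of_eq ?_)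
        apply intervalIntegral.integral_congr
        intro t ht
        simp only []
        rw [abs_mul, abs_mul]
        norm_num
      refine h1.trans ?_
      rw [intervalIntegral.integral_of_le hab]
      have : ∫ t in Set.Ioc a b, 2 * |h t| * |f' t| ≤ ∫ t in S, 2 * |h t| * |f' t| := by
        apply setIntegral_mono_set hgint
        · filter_upwards with t using by positivity
        · exact (Set.Ioc_subset_Icc_self.trans hsub).eventuallyLE
      simpa using this
    rcases le_total c x with hcx | hcx
    · have := main c x hc hx hcx
      calc h x ^ 2 = |h x ^ 2 - h c ^ 2| := by
            rw [hzero, zero_pow two_ne_zero, sub_zero, abs_of_nonneg (sq_nonneg _)]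
        _ ≤ _ := this
    · have := main x c hx hc hcx
      calc h x ^ 2 = |h c ^ 2 - h x ^ 2| := by
            rw [hzero, zero_pow two_ne_zero, zero_sub, abs_neg, abs_of_nonneg (sq_nonneg _)]
        _ ≤ _ := this
  -- the sup is attained
  have hne : ((fun x => |h x|) '' S).Nonempty := ⟨|h c|, ⟨c, hc, rfl⟩⟩
  have himg : IsCompact ((fun x => |h x|) '' S) := hcompact.image_of_continuousOn hcont.abs
  obtain ⟨x₁, hx₁, hx₁eq⟩ := himg.sSup_mem hne
  rw [← hx₁eq, sq_abs]
  -- Cauchy–Schwarz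
  have hfin : Fact ((volume.restrict S) S < ⊤) := ⟨by
    rw [Measure.restrict_apply_self]; simp [hS]⟩
  have : IsFiniteMeasure (volume.restrict S) := by
    constructor
    rw [Measure.restrict_apply_univ]
    simp [hS]
  have hmemh : MemLp h (ENNReal.ofReal 2) (volume.restrict S) := by
    obtain ⟨C, hC⟩ := hcompact.exists_bound_of_continuousOn hcont
    refine MemLp.of_bound (hcont.aestronglyMeasurable hcompact.measurableSet) C ?_
    exact (ae_restrict_iff' hcompact.measurableSet).2 (Filter.Eventually.of_forall fun t ht => by
      simpa using hC t ht)
  have hmemf' : MemLp f' (ENNReal.ofReal 2) (volume.restrict S) := by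
    obtain ⟨C, hC⟩ := hcompact.exists_bound_of_continuousOn hf'cont
    refine MemLp.of_bound (hf'cont.aestronglyMeasurable hcompact.measurableSet) C ?_
    exact (ae_restrict_iff' hcompact.measurableSet).2 (Filter.Eventually.of_forall fun t ht => by
      simpa using hC t ht)
  have hconj : (2 : ℝ).HolderConjugate 2 := by
    rw [Real.holderConjugate_iff]; norm_num
  have hCS := integral_mul_norm_le_Lp_mul_Lq hconj hmemh hmemf'
  have heq1 : ∫ t in S, ‖h t‖ ^ (2:ℝ) = ∫ t in S, h t ^ 2 := by
    apply integral_congr_ae; filter_upwards with t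
    rw [Real.norm_eq_abs, show (2:ℝ) = ((2:ℕ):ℝ) by norm_num, Real.rpow_natCast, sq_abs]
  have heq2 : ∫ t in S, ‖f' t‖ ^ (2:ℝ) = ∫ t in S, f' t ^ 2 := by
    apply integral_congr_ae; filter_upwards with t
    rw [Real.norm_eq_abs, show (2:ℝ) = ((2:ℕ):ℝ) by norm_num, Real.rpow_natCast, sq_abs]
  have hnn1 : 0 ≤ ∫ t in S, h t ^ 2 := by positivity
  have hnn2 : 0 ≤ ∫ t in S, f' t ^ 2 := by positivity
  calc h x₁ ^ 2 ≤ ∫ t in S, 2 * |h t| * |f' t| := key x₁ hx₁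
    _ = 2 * ∫ t in S, ‖h t‖ * ‖f' t‖ := by
        rw [← integral_const_mul]
        apply integral_congr_ae; filter_upwards with t
        simp [Real.norm_eq_abs, mul_assoc]
    _ ≤ 2 * ((∫ t in S, ‖h t‖ ^ (2:ℝ)) ^ (1/2 : ℝ) * (∫ t in S, ‖f' t‖ ^ (2:ℝ)) ^ (1/2 : ℝ)) := by
        linarith [hCS]
    _ = 2 * Real.sqrt (∫ t in S, h t ^ 2) * Real.sqrt (∫ t in S, f' t ^ 2) := by
        rw [heq1, heq2, Real.sqrt_eq_rpow, Real.sqrt_eq_rpow, mul_assoc]
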